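/- Let X₁, X₂, X₃, X₄ be Dedekind complete Banach lattices and A : X₁ → X₂, B : X₃ → X₄ nonzero bounded operators. The multiplication operator L_A R_B : L(X₄,X₁) → L(X₃,X₂), T ↦ ATB, is positive (maps positive operators to positive operators) if and only if A and B are both positive or both negative. -/

import Mathlib

/-- A positive operator between Banach lattices. -/
def IsPosM {E F : Type*} [NormedAddCommGroup E] [Lattice E] [HasSolidNorm E] [IsOrderedAddMonoid E] [NormedSpace ℝ E]
    [NormedAddCommGroup F] [Lattice F] [HasSolidNorm F] [IsOrderedAddMonoid F] [NormedSpace ℝ F] (A : E →L[ℝ] F) : Prop :=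
  ∀ x : E, 0 ≤ x → 0 ≤ A x

/-- Dedekind completeness of a lattice. -/
def DedekindComplete (X : Type*) [Lattice X] : Prop :=
  ∀ s : Set X, s.Nonempty → BddAbove s → ∃ b, IsLUB s b

/-!
Testing `A T B` on the rank-one operators `T = f ⊗ x` (with `f ≥ 0` a functional and `x ≥ 0`)
shows `f (B z) • A x ≥ 0` for all `x, z ≥ 0`. Positive functionals detect positivity
(Hahn–Banach separation from the closed positive cone), so if `f (B z) > 0` for one choice then
`A ≥ 0`, and testing against a positive functional not vanishing on some `A x₀ ≥ 0` gives
`B ≥ 0`. Otherwise `-B ≥ 0`, and the same argument applies to `-A, -B`, since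
`(-A) T (-B) = A T B`.
-/

open Filter Topology

section PositiveCone

variable {E : Type*} [AddCommGroup E] [Lattice E] [IsOrderedAddMonoid E]

theorem nonneg_of_two_pow_nsmul_nonneg {x : E} (k : ℕ) (h : 0 ≤ 2 ^ k • x) : 0 ≤ x := by
  induction k generalizing x with
  | zero => simpa using h
  | succ k ih => exact nsmul_two_semiclosed (ih (by rwa [← mul_nsmul', ← pow_succ]))

variable [Module ℝ E] [TopologicalSpace E] [ContinuousSMul ℝ E] [OrderClosedTopology E]

-- Dyadic multiples `(n / 2 ^ k) • x` of `x ≥ 0` are nonnegative, and they converge to `c • x`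
-- inside the closed positive cone.
instance posSMulMono_real_of_orderClosedTopology : PosSMulMono ℝ E :=
  .of_smul_nonneg fun c hc x hx => by
    have hdyadic (k : ℕ) : 0 ≤ ((⌊c * 2 ^ k⌋₊ : ℝ) / 2 ^ k) • x := by
      refine nonneg_of_two_pow_nsmul_nonneg k ?_
      rw [← Nat.cast_smul_eq_nsmul ℝ, smul_smul, Nat.cast_pow, Nat.cast_ofNat,
        mul_div_cancel₀ _ (by positivity), Nat.cast_smul_eq_nsmul]
      exact nsmul_nonneg hx _
    have hlim : Tendsto (fun k : ℕ => (⌊c * 2 ^ k⌋₊ : ℝ) / 2 ^ k) atTop (𝓝 c) :=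
      (tendsto_nat_floor_mul_div_atTop hc).comp (tendsto_pow_atTop_atTop_of_one_lt one_lt_two)
    exact ge_of_tendsto' (hlim.smul_const x) hdyadic

end PositiveCone

section BanachLattice

variable {E F : Type*}
  [NormedAddCommGroup E] [Lattice E] [HasSolidNorm E] [IsOrderedAddMonoid E] [NormedSpace ℝ E]
  [NormedAddCommGroup F] [Lattice F] [HasSolidNorm F] [IsOrderedAddMonoid F] [NormedSpace ℝ F]

theorem exists_isPosM_apply_neg_of_not_nonneg {v : E} (hv : ¬0 ≤ v) :
    ∃ f : E →L[ℝ] ℝ, IsPosM f ∧ f v < 0 :=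
  (ProperCone.positive ℝ E).hyperplane_separation_point hv

theorem nonneg_of_forall_isPosM_apply_nonneg {v : E}
    (h : ∀ f : E →L[ℝ] ℝ, IsPosM f → 0 ≤ f v) : 0 ≤ v := by
  by_contra hv
  obtain ⟨f, hf, hfv⟩ := exists_isPosM_apply_neg_of_not_nonneg hv
  exact (h f hf).not_gt hfv

theorem exists_isPosM_apply_pos {u : E} (hu : 0 ≤ u) (hu₀ : u ≠ 0) :
    ∃ f : E →L[ℝ] ℝ, IsPosM f ∧ 0 < f u := by
  obtain ⟨f, hf, hfu⟩ := exists_isPosM_apply_neg_of_not_nonneg (v := -u)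
    fun h => hu₀ (le_antisymm (neg_nonneg.1 h) hu)
  exact ⟨f, hf, by simpa using hfu⟩

theorem IsPosM.smulRight {f : E →L[ℝ] ℝ} (hf : IsPosM f) {x : F} (hx : 0 ≤ x) :
    IsPosM (f.smulRight x) :=
  fun y hy => smul_nonneg (hf y hy) hx

end BanachLattice

theorem exists_nonneg_apply_ne_zero {E F : Type*}
    [NormedAddCommGroup E] [Lattice E] [IsOrderedAddMonoid E] [NormedSpace ℝ E]
    [NormedAddCommGroup F] [NormedSpace ℝ F] {A : E →L[ℝ] F} (hA : A ≠ 0) :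
    ∃ x : E, 0 ≤ x ∧ A x ≠ 0 := by
  by_contra! h
  refine hA (ContinuousLinearMap.ext fun y => ?_)
  rw [← posPart_sub_negPart y, map_sub, h _ (posPart_nonneg y), h _ (negPart_nonneg y),
    sub_zero, zero_apply]

section MultiplicationOperator

variable {X₁ X₂ X₃ X₄ : Type*}
  [NormedAddCommGroup X₁] [Lattice X₁] [HasSolidNorm X₁] [IsOrderedAddMonoid X₁] [NormedSpace ℝ X₁]
  [NormedAddCommGroup X₂] [Lattice X₂] [HasSolidNorm X₂] [IsOrderedAddMonoid X₂] [NormedSpace ℝ X₂]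
  [NormedAddCommGroup X₃] [Lattice X₃] [HasSolidNorm X₃] [IsOrderedAddMonoid X₃] [NormedSpace ℝ X₃]
  [NormedAddCommGroup X₄] [Lattice X₄] [HasSolidNorm X₄] [IsOrderedAddMonoid X₄] [NormedSpace ℝ X₄]

theorem IsPosM.comp {A : X₂ →L[ℝ] X₃} {B : X₁ →L[ℝ] X₂} (hA : IsPosM A) (hB : IsPosM B) :
    IsPosM (A.comp B) :=
  fun x hx => hA _ (hB x hx)

variable {A : X₁ →L[ℝ] X₂} {B : X₃ →L[ℝ] X₄}

theorem smul_nonneg_of_forall_isPosM_comp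
    (H : ∀ T : X₄ →L[ℝ] X₁, IsPosM T → IsPosM (A.comp (T.comp B)))
    {f : X₄ →L[ℝ] ℝ} (hf : IsPosM f) {x : X₁} (hx : 0 ≤ x) {z : X₃} (hz : 0 ≤ z) :
    0 ≤ f (B z) • A x := by
  simpa using H _ (hf.smulRight hx) z hz

theorem isPosM_and_isPosM_of_forall_isPosM_comp
    (H : ∀ T : X₄ →L[ℝ] X₁, IsPosM T → IsPosM (A.comp (T.comp B))) (hA : A ≠ 0)
    {f : X₄ →L[ℝ] ℝ} (hf : IsPosM f) {z₀ : X₃} (hz₀ : 0 ≤ z₀) (hfz₀ : 0 < f (B z₀)) :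
    IsPosM A ∧ IsPosM B := by
  have hApos : IsPosM A := fun x hx =>
    nonneg_of_smul_nonneg_of_pos_left (smul_nonneg_of_forall_isPosM_comp H hf hx hz₀) hfz₀
  obtain ⟨x₀, hx₀, hAx₀⟩ := exists_nonneg_apply_ne_zero hA
  obtain ⟨g, hg, hgAx₀⟩ := exists_isPosM_apply_pos (hApos x₀ hx₀) hAx₀
  refine ⟨hApos, fun z hz => nonneg_of_forall_isPosM_apply_nonneg fun f' hf' => ?_⟩
  have := hg _ (smul_nonneg_of_forall_isPosM_comp H hf' hx₀ hz)
  rw [map_smul, smul_eq_mul] at this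
  exact nonneg_of_mul_nonneg_left this hgAx₀

end MultiplicationOperator

theorem mult_op_positive_iff_general
    {X₁ X₂ X₃ X₄ : Type*}
    [NormedAddCommGroup X₁] [Lattice X₁] [HasSolidNorm X₁] [IsOrderedAddMonoid X₁] [NormedSpace ℝ X₁]
    [NormedAddCommGroup X₂] [Lattice X₂] [HasSolidNorm X₂] [IsOrderedAddMonoid X₂] [NormedSpace ℝ X₂]
    [NormedAddCommGroup X₃] [Lattice X₃] [HasSolidNorm X₃] [IsOrderedAddMonoid X₃] [NormedSpace ℝ X₃]
    [NormedAddCommGroup X₄] [Lattice X₄] [HasSolidNorm X₄] [IsOrderedAddMonoid X₄] [NormedSpace ℝ X₄]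
    (A : X₁ →L[ℝ] X₂) (B : X₃ →L[ℝ] X₄) (hA : A ≠ 0) (hB : B ≠ 0) :
    (∀ T : X₄ →L[ℝ] X₁, IsPosM T → IsPosM (A.comp (T.comp B))) ↔
      (IsPosM A ∧ IsPosM B) ∨ (IsPosM (-A) ∧ IsPosM (-B)) := by
  have neg_comp_comp_neg (T : X₄ →L[ℝ] X₁) : (-A).comp (T.comp (-B)) = A.comp (T.comp B) := by
    simp
  constructor
  · intro H
    by_cases hpos : ∃ f : X₄ →L[ℝ] ℝ, IsPosM f ∧ ∃ z, 0 ≤ z ∧ 0 < f (B z)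
    · obtain ⟨f, hf, z, hz, hfz⟩ := hpos
      exact .inl (isPosM_and_isPosM_of_forall_isPosM_comp H hA hf hz hfz)
    · push Not at hpos
      have hBneg : IsPosM (-B) := fun z hz =>
        nonneg_of_forall_isPosM_apply_nonneg fun f hf => by simpa using hpos f hf z hz
      obtain ⟨z₀, hz₀, hBz₀⟩ := exists_nonneg_apply_ne_zero (neg_ne_zero.2 hB)
      obtain ⟨f, hf, hfz₀⟩ := exists_isPosM_apply_pos (hBneg z₀ hz₀) hBz₀
      refine .inr (isPosM_and_isPosM_of_forall_isPosM_comp (fun T hT => ?_) (neg_ne_zero.2 hA)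
        hf hz₀ hfz₀)
      rw [neg_comp_comp_neg]
      exact H T hT
  · rintro (⟨hApos, hBpos⟩ | ⟨hAneg, hBneg⟩) T hT
    · exact hApos.comp (hT.comp hBpos)
    · rw [← neg_comp_comp_neg]
      exact hAneg.comp (hT.comp hBneg)

/-- The multiplication operator `L_A R_B : T ↦ A T B` is positive iff `A` and `B` are
both positive or both negative. -/
theorem mult_op_positive_iff
    {X₁ X₂ X₃ X₄ : Type*}
    [NormedAddCommGroup X₁] [Lattice X₁] [HasSolidNorm X₁] [IsOrderedAddMonoid X₁] [NormedSpace ℝ X₁] [CompleteSpace X₁]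
    [NormedAddCommGroup X₂] [Lattice X₂] [HasSolidNorm X₂] [IsOrderedAddMonoid X₂] [NormedSpace ℝ X₂] [CompleteSpace X₂]
    [NormedAddCommGroup X₃] [Lattice X₃] [HasSolidNorm X₃] [IsOrderedAddMonoid X₃] [NormedSpace ℝ X₃] [CompleteSpace X₃]
    [NormedAddCommGroup X₄] [Lattice X₄] [HasSolidNorm X₄] [IsOrderedAddMonoid X₄] [NormedSpace ℝ X₄] [CompleteSpace X₄]
    (hDC₁ : DedekindComplete X₁) (hDC₂ : DedekindComplete X₂)
    (hDC₃ : DedekindComplete X₃) (hDC₄ : DedekindComplete X₄)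
    (A : X₁ →L[ℝ] X₂) (B : X₃ →L[ℝ] X₄) (hA : A ≠ 0) (hB : B ≠ 0) :
    (∀ T : X₄ →L[ℝ] X₁, IsPosM T → IsPosM (A.comp (T.comp B))) ↔
      (IsPosM A ∧ IsPosM B) ∨ (IsPosM (-A) ∧ IsPosM (-B)) :=
  mult_op_positive_iff_general A B hA hB
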